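/- Let q be a prime power with 3 | (q−1), and let n be a prime with n ≠ 2, n | (q+1) and 3 | (n−1). Fix λ ∈ 𝔽_{q²} of multiplicative order n and A, B ∈ 𝔽_{q²} with A^{q+1} = B^{q+1} = 1. Then there is an integer i such that the projectivities α : (X:Y:Z) ↦ (λX : λ^i Y : Z) and β : (X:Y:Z) ↦ (AY : BZ : X) of PGL(3, 𝔽_{q²}) both map the Fermat curve X^{q+1} + Y^{q+1} + Z^{q+1} = 0 onto itself, α has order n, β has order 3, β normalizes ⟨α⟩ without centralizing it, and G = ⟨α, β⟩ is a nonabelian group of order 3n isomorphic to a nontrivial semidirect product C_n ⋊ C_3. -/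

import Mathlib

/-- The Fermat (Hermitian) polynomial `X^(q+1) + Y^(q+1) + Z^(q+1)` evaluated at a vector. -/
def fermatEval (q : ℕ) {K : Type} [Field K] (v : Fin 3 → K) : K :=
  v 0 ^ (q + 1) + v 1 ^ (q + 1) + v 2 ^ (q + 1)

/-- The action of a matrix with entries in `F` on vectors over an extension `K`. -/
def applyMat {F K : Type} [Field F] [Field K] [Algebra F K]
    (g : Matrix (Fin 3) (Fin 3) F) (v : Fin 3 → K) : Fin 3 → K :=
  (g.map (algebraMap F K)).mulVec v

/-!
With `k` the residue of a primitive cube root of unity modulo `n` and `i = k + 1`, conjugation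
by `β` permutes the diagonal entries of `α` cyclically:
`β α β⁻¹ = diag(λ^(k+1), 1, λ) = λ · α^k`, since `λ^(k² + k + 1) = 1`. So `β α β⁻¹ = α^k` in
`PGL(3)`, while `β³ = AB · I` is scalar. Hence `⟨α, β⟩` is the image of `C_n ⋊ C_3`, the generator
of `C_3` acting by multiplication by `k`, and this image is faithful because `α` and `β` have
coprime orders `n` and `3`. Both projectivities preserve the curve because all their nonzero
entries are `(q + 1)`-th roots of unity.
-/

open Subgroup

section ZModPow

variable {M : Type*} [Monoid M] {m : ℕ} {g : M}

theorem pow_mod_of_pow_eq_one (hg : g ^ m = 1) (a : ℕ) : g ^ (a % m) = g ^ a := by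
  rw [← pow_mod_orderOf, Nat.mod_mod_of_dvd _ (orderOf_dvd_of_pow_eq_one hg), pow_mod_orderOf]

variable (m) [NeZero m]

def zmodPowHom (g : M) (hg : g ^ m = 1) : Multiplicative (ZMod m) →* M where
  toFun x := g ^ x.toAdd.val
  map_one' := by simp
  map_mul' x y := by simp only [toAdd_mul, ZMod.val_add, pow_mod_of_pow_eq_one hg, pow_add]

variable {m}

@[simp]
theorem zmodPowHom_apply (hg : g ^ m = 1) (x : Multiplicative (ZMod m)) :
    zmodPowHom m g hg x = g ^ x.toAdd.val := rfl

theorem zmodPowHom_ofAdd_natCast (hg : g ^ m = 1) (a : ℕ) :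
    zmodPowHom m g hg (.ofAdd a) = g ^ a := by
  simp [ZMod.val_natCast, pow_mod_of_pow_eq_one hg]

theorem zmodPowHom_injective (hg : g ^ m = 1) (hord : orderOf g = m) :
    Function.Injective (zmodPowHom m g hg) := by
  intro x y hxy
  have hlt (z : Multiplicative (ZMod m)) : z.toAdd.val < orderOf g := hord ▸ z.toAdd.val_lt
  exact Multiplicative.toAdd.injective <|
    ZMod.val_injective m (pow_injOn_Iio_orderOf (hlt x) (hlt y) hxy)

end ZModPow

theorem zmodPowHom_range {G : Type*} [Group G] {m : ℕ} [NeZero m] {g : G} (hg : g ^ m = 1) :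
    (zmodPowHom m g hg).range = zpowers g := by
  refine le_antisymm ?_ <|
    zpowers_le.mpr ⟨.ofAdd (1 : ℕ), (zmodPowHom_ofAdd_natCast hg 1).trans (pow_one g)⟩
  rintro _ ⟨x, rfl⟩
  exact npow_mem_zpowers g _

section UnitAction

variable {n : ℕ} (m : ℕ) [NeZero m] (u : (ZMod n)ˣ) (hu : u ^ m = 1)

def unitAction : Multiplicative (ZMod m) →* MulAut (Multiplicative (ZMod n)) :=
  (MulAutMultiplicative (ZMod n)).symm.toMonoidHom.comp <|
    AddAut.mulLeft.comp (zmodPowHom m u hu)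

theorem unitAction_apply (c : Multiplicative (ZMod m)) (x : Multiplicative (ZMod n)) :
    unitAction m u hu c x = .ofAdd ((zmodPowHom m u hu c : ZMod n) * x.toAdd) := rfl

theorem unitAction_ne_one (hu1 : u ≠ 1) : unitAction m u hu ≠ 1 := by
  refine fun h ↦ hu1 ?_
  have hgen := DFunLike.congr_fun (DFunLike.congr_fun h (.ofAdd (1 : ℕ))) (.ofAdd 1)
  rw [unitAction_apply, zmodPowHom_ofAdd_natCast, pow_one] at hgen
  simpa using hgen

end UnitAction

namespace SemidirectProduct

variable {N G H : Type*} [Group N] [Group G] [Group H] {φ : G →* MulAut N}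
  {fn : N →* H} {fg : G →* H}
  {h : ∀ g, fn.comp (φ g).toMonoidHom = (MulAut.conj (fg g)).toMonoidHom.comp fn}

theorem lift_apply (x : N ⋊[φ] G) : lift fn fg h x = fn x.left * fg x.right := rfl

theorem range_lift : (lift fn fg h).range = fn.range ⊔ fg.range := by
  refine le_antisymm ?_ (sup_le ?_ ?_)
  · rintro _ ⟨x, rfl⟩
    exact mul_mem (mem_sup_left ⟨x.left, rfl⟩) (mem_sup_right ⟨x.right, rfl⟩)
  · rintro _ ⟨x, rfl⟩
    exact ⟨inl x, lift_inl ..⟩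
  · rintro _ ⟨x, rfl⟩
    exact ⟨inr x, lift_inr ..⟩

theorem lift_injective (hn : Function.Injective fn) (hg : Function.Injective fg)
    (hdisj : Disjoint fn.range fg.range) : Function.Injective (lift fn fg h) := by
  refine (injective_iff_map_eq_one _).mpr fun x hx ↦ ?_
  rw [lift_apply, mul_eq_one_iff_inv_eq] at hx
  have hright : x.right = 1 := hg <| by
    rw [map_one, ← mem_bot]
    exact disjoint_iff_inf_le.mp hdisj ⟨⟨x.left⁻¹, by rw [map_inv, hx]⟩, ⟨x.right, rfl⟩⟩
  have hleft : x.left = 1 := hn <| by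
    rw [hright, map_one, inv_eq_one] at hx
    rw [hx, map_one]
  ext <;> simp [hleft, hright]

end SemidirectProduct

section ConjEqPow

variable {G : Type*} [Group G] {α β : G} {k : ℕ}

theorem conj_pow_eq_pow_mul_of_conj_eq_pow (hconj : β * α * β⁻¹ = α ^ k) (j a : ℕ) :
    β ^ j * α ^ a * (β ^ j)⁻¹ = α ^ (k ^ j * a) := by
  induction j generalizing a with
  | zero => simp
  | succ j ih =>
    calc β ^ (j + 1) * α ^ a * (β ^ (j + 1))⁻¹
        = β ^ j * (β * α * β⁻¹) ^ a * (β ^ j)⁻¹ := by rw [conj_pow, pow_succ]; group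
      _ = α ^ (k ^ (j + 1) * a) := by rw [hconj, ← pow_mul, ih, pow_succ, mul_assoc]

theorem mul_ne_mul_of_conj_eq_pow {n : ℕ} (hα : orderOf α = n) (hconj : β * α * β⁻¹ = α ^ k)
    (hk : (k : ZMod n) ≠ 1) : β * α ≠ α * β := by
  intro h
  have hkα : α ^ k = α ^ 1 := by rw [← hconj, h, mul_inv_cancel_right, pow_one]
  rw [pow_eq_pow_iff_modEq, hα, ← ZMod.natCast_eq_natCast_iff, Nat.cast_one] at hkα
  exact hk hkα

theorem nonempty_closure_pair_mulEquiv_semidirectProduct {n m : ℕ} [NeZero n] [NeZero m]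
    (hnm : n.Coprime m) (hα : orderOf α = n) (hβ : orderOf β = m) {u : (ZMod n)ˣ}
    (hu : u ^ m = 1) (hk : (k : ZMod n) = u) (hconj : β * α * β⁻¹ = α ^ k) :
    Nonempty (closure {α, β} ≃*
      Multiplicative (ZMod n) ⋊[unitAction m u hu] Multiplicative (ZMod m)) := by
  have hαn : α ^ n = 1 := hα ▸ pow_orderOf_eq_one α
  have hβm : β ^ m = 1 := hβ ▸ pow_orderOf_eq_one β
  have hcomp : ∀ c, (zmodPowHom n α hαn).comp (unitAction m u hu c).toMonoidHom =
      (MulAut.conj (zmodPowHom m β hβm c)).toMonoidHom.comp (zmodPowHom n α hαn) := by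
    refine fun c ↦ MonoidHom.ext fun x ↦ ?_
    have hcast : (zmodPowHom m u hu c : ZMod n) * x.toAdd =
        ((k ^ c.toAdd.val * x.toAdd.val : ℕ) : ZMod n) := by
      simp [hk]
    rw [MonoidHom.comp_apply, MulEquiv.coe_toMonoidHom, unitAction_apply, hcast,
      zmodPowHom_ofAdd_natCast]
    simp only [MonoidHom.comp_apply, MulEquiv.coe_toMonoidHom, MulAut.conj_apply,
      zmodPowHom_apply, conj_pow_eq_pow_mul_of_conj_eq_pow hconj]
  have hinj : Function.Injective (SemidirectProduct.lift _ _ hcomp) := by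
    refine SemidirectProduct.lift_injective (zmodPowHom_injective hαn hα)
      (zmodPowHom_injective hβm hβ) (disjoint_of_coprime_natCard ?_)
    rwa [zmodPowHom_range, zmodPowHom_range, Nat.card_zpowers, Nat.card_zpowers, hα, hβ]
  have hrange : (SemidirectProduct.lift _ _ hcomp).range = closure {α, β} := by
    rw [SemidirectProduct.range_lift, zmodPowHom_range, zmodPowHom_range, Set.insert_eq,
      Subgroup.closure_union, zpowers_eq_closure, zpowers_eq_closure]
  exact ⟨(MulEquiv.subgroupCongr hrange.symm).trans (MonoidHom.ofInjective hinj).symm⟩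

end ConjEqPow

namespace QuotientGroup

variable {G : Type*} [Group G] {N : Subgroup G} [N.Normal]

theorem orderOf_mk_eq_prime {p : ℕ} [Fact p.Prime] {g : G} (hg : g ^ p ∈ N) (hgN : g ∉ N) :
    orderOf (g : G ⧸ N) = p :=
  orderOf_eq_prime (by rwa [← mk_pow, eq_one_iff]) (by rwa [Ne, eq_one_iff])

theorem mk_conj_eq_pow {a b z : G} {k : ℕ} (hz : z ∈ N) (h : b * a * b⁻¹ = z * a ^ k) :
    (b : G ⧸ N) * a * (b : G ⧸ N)⁻¹ = (a : G ⧸ N) ^ k := by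
  rw [← mk_inv, ← mk_mul, ← mk_mul, h, mk_mul, (eq_one_iff z).mpr hz, one_mul, mk_pow]

end QuotientGroup

theorem dvd_succ_mul_val_add_one_of_orderOf_eq_three {n : ℕ} [Fact n.Prime] {τ : (ZMod n)ˣ}
    (hτ : orderOf τ = 3) : n ∣ ((τ : ZMod n).val + 1) * (τ : ZMod n).val + 1 := by
  rw [← ZMod.natCast_eq_zero_iff]
  have hprim : IsPrimitiveRoot (τ : ZMod n) 3 := by
    rw [← hτ, ← orderOf_units]
    exact .orderOf _
  have hsum := hprim.geom_sum_eq_zero (by norm_num)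
  simp only [Finset.sum_range_succ, Finset.sum_range_zero] at hsum
  push_cast [ZMod.natCast_zmod_val]
  linear_combination hsum

namespace Matrix

variable {R : Type*} [CommRing R]

def cyclicMonomial (A B : R) : Matrix (Fin 3) (Fin 3) R := !![0, A, 0; 0, 0, B; 1, 0, 0]

variable (A B : R)

theorem cyclicMonomial_mul_diagonal (d : Fin 3 → R) :
    cyclicMonomial A B * diagonal d = diagonal ![d 1, d 2, d 0] * cyclicMonomial A B := by
  ext i j
  fin_cases i <;> fin_cases j <;> simp [cyclicMonomial, mul_comm]

theorem cyclicMonomial_pow_three : cyclicMonomial A B ^ 3 = scalar (Fin 3) (A * B) := by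
  ext i j
  fin_cases i <;> fin_cases j <;>
    simp [cyclicMonomial, pow_succ, Matrix.mul_apply, Fin.sum_univ_three, mul_comm]

namespace GeneralLinearGroup

variable {ι : Type*} [Fintype ι] [DecidableEq ι]

def diagonal : (ι → Rˣ) →* GL ι R :=
  (Units.map (diagonalRingHom ι R).toMonoidHom).comp MulEquiv.piUnits.symm.toMonoidHom

@[simp]
theorem coe_diagonal (d : ι → Rˣ) :
    (diagonal d : Matrix ι ι R) = Matrix.diagonal fun i ↦ (d i : R) := rfl

theorem diagonal_injective : Function.Injective (diagonal : (ι → Rˣ) → GL ι R) := by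
  intro d d' h
  refine funext fun i ↦ Units.ext ?_
  simpa using congr_arg (fun g : GL ι R ↦ (g : Matrix ι ι R) i i) h

theorem diagonal_const (c : Rˣ) : diagonal (fun _ : ι ↦ c) = scalar ι c :=
  Units.ext <| by rw [coe_diagonal, coe_scalar, Matrix.scalar_apply]

variable {A B} {b : GL (Fin 3) R}

theorem cyclicMonomial_conj_diagonal
    (hb : (b : Matrix (Fin 3) (Fin 3) R) = cyclicMonomial A B) (d : Fin 3 → Rˣ) :
    b * diagonal d * b⁻¹ = diagonal ![d 1, d 2, d 0] := by
  rw [mul_inv_eq_iff_eq_mul]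
  ext : 1
  simp only [Units.val_mul, coe_diagonal, hb, Matrix.cyclicMonomial_mul_diagonal]
  congr
  ext i; fin_cases i <;> rfl

theorem not_commute_cyclicMonomial_diagonal
    (hb : (b : Matrix (Fin 3) (Fin 3) R) = cyclicMonomial A B) {d : Fin 3 → Rˣ} (hd : d 0 ≠ d 2) :
    ¬Commute b (diagonal d) := by
  intro h
  have hfix := cyclicMonomial_conj_diagonal hb d
  rw [h.eq, mul_inv_cancel_right] at hfix
  exact hd (congr_fun (diagonal_injective hfix) 2).symm

theorem cyclicMonomial_pow_three_mem_center
    (hb : (b : Matrix (Fin 3) (Fin 3) R) = cyclicMonomial A B) : b ^ 3 ∈ center (GL (Fin 3) R) :=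
  mem_center_iff_val_mem_range_scalar.mpr
    ⟨A * B, by rw [Units.val_pow_eq_pow_val, hb, cyclicMonomial_pow_three]⟩

theorem cyclicMonomial_conj_diagonal_pow
    (hb : (b : Matrix (Fin 3) (Fin 3) R) = cyclicMonomial A B) {μ : Rˣ} {k : ℕ}
    (hμ : μ ^ ((k + 1) * k + 1) = 1) :
    b * diagonal (fun j ↦ μ ^ ![1, k + 1, 0] j) * b⁻¹ =
      scalar (Fin 3) μ * diagonal (fun j ↦ μ ^ ![1, k + 1, 0] j) ^ k := by
  rw [cyclicMonomial_conj_diagonal hb, ← diagonal_const, ← map_pow, ← map_mul]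
  congr 1
  funext j
  fin_cases j <;> simp [← pow_mul, ← pow_succ', hμ]

theorem mk_diagonal_cyclicMonomial_relations {n : ℕ} [Fact n.Prime]
    (hb : (b : Matrix (Fin 3) (Fin 3) R) = cyclicMonomial A B) {μ : Rˣ} (hμ : orderOf μ = n)
    {k : ℕ} (hk : n ∣ (k + 1) * k + 1) :
    let α : GL (Fin 3) R ⧸ center (GL (Fin 3) R) := diagonal fun j ↦ μ ^ ![1, k + 1, 0] j
    let β : GL (Fin 3) R ⧸ center (GL (Fin 3) R) := b
    orderOf α = n ∧ orderOf β = 3 ∧ β * α * β⁻¹ = α ^ k := by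
  intro α β
  have hμ1 : μ ≠ 1 := fun h ↦ (Fact.out : n.Prime).one_lt.ne' (by rw [← hμ, h, orderOf_one])
  have hab : ¬Commute b (diagonal fun j ↦ μ ^ ![1, k + 1, 0] j) :=
    not_commute_cyclicMonomial_diagonal hb (by simpa using hμ1)
  have han : (diagonal fun j ↦ μ ^ ![1, k + 1, 0] j) ^ n = 1 := by
    rw [← map_pow, ← map_one (diagonal (ι := Fin 3) (R := R))]
    exact congr_arg diagonal <| funext fun j ↦ by
      rw [Pi.pow_apply, pow_right_comm, ← hμ, pow_orderOf_eq_one, one_pow, Pi.one_apply]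
  refine ⟨QuotientGroup.orderOf_mk_eq_prime (han ▸ one_mem _)
      fun h ↦ hab (mem_center_iff.mp h b),
    QuotientGroup.orderOf_mk_eq_prime (cyclicMonomial_pow_three_mem_center hb)
      fun h ↦ hab (mem_center_iff.mp h _).symm,
    QuotientGroup.mk_conj_eq_pow (center_eq_range_scalar (n := Fin 3) (R := R) ▸ ⟨μ, rfl⟩)
      (cyclicMonomial_conj_diagonal_pow hb (orderOf_dvd_iff_pow_eq_one.mp (hμ ▸ hk)))⟩

end GeneralLinearGroup

end Matrix

open Matrix.GeneralLinearGroup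

section Fermat

variable {F K : Type} [Field F] [Field K] [Algebra F K] (q : ℕ)

theorem fermatEval_applyMat_diagonal {d : Fin 3 → Fˣ} (hd : ∀ j, d j ^ (q + 1) = 1)
    (v : Fin 3 → K) :
    fermatEval q (applyMat (Matrix.diagonal fun j ↦ (d j : F)) v) = fermatEval q v := by
  simp [fermatEval, applyMat, Matrix.mulVec_diagonal, mul_pow, ← map_pow,
    ← Units.val_pow_eq_pow_val, hd]

theorem fermatEval_applyMat_cyclicMonomial {A B : F} (hA : A ^ (q + 1) = 1)
    (hB : B ^ (q + 1) = 1) (v : Fin 3 → K) :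
    fermatEval q (applyMat (Matrix.cyclicMonomial A B) v) = fermatEval q v := by
  simp [fermatEval, applyMat, Matrix.cyclicMonomial, Matrix.mulVec, dotProduct,
    Fin.sum_univ_three, mul_pow, ← map_pow, hA, hB]
  ring

end Fermat

theorem stmt_11_general (q : ℕ)
    (n : ℕ) (hn : n.Prime) (hnq : n ∣ q + 1) (h3n : 3 ∣ n - 1)
    (F : Type) [Field F]
    (K : Type) [Field K] [Algebra F K]
    (lam : F) (hlam : orderOf lam = n)
    (A B : F) (hA : A ^ (q + 1) = 1) (hB : B ^ (q + 1) = 1)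
    (b : Matrix.GeneralLinearGroup (Fin 3) F)
    (hbmat : (b : Matrix (Fin 3) (Fin 3) F) = !![0, A, 0; 0, 0, B; 1, 0, 0]) :
    ∃ (i : ℕ) (a : Matrix.GeneralLinearGroup (Fin 3) F),
      (a : Matrix (Fin 3) (Fin 3) F) = !![lam, 0, 0; 0, lam ^ i, 0; 0, 0, 1] ∧
      (∀ g ∈ ({a, b} : Set (Matrix.GeneralLinearGroup (Fin 3) F)),
        ∀ v : Fin 3 → K, v ≠ 0 →
          (fermatEval q v = 0 ↔ fermatEval q (applyMat (g : Matrix (Fin 3) (Fin 3) F) v) = 0)) ∧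
      (let α : Matrix.GeneralLinearGroup (Fin 3) F ⧸
          Subgroup.center (Matrix.GeneralLinearGroup (Fin 3) F) := QuotientGroup.mk a
       let β : Matrix.GeneralLinearGroup (Fin 3) F ⧸
          Subgroup.center (Matrix.GeneralLinearGroup (Fin 3) F) := QuotientGroup.mk b
       orderOf α = n ∧ orderOf β = 3 ∧
        β * α * β⁻¹ ∈ Subgroup.zpowers α ∧ β * α ≠ α * β ∧
        (¬ ∀ x ∈ Subgroup.closure {α, β}, ∀ y ∈ Subgroup.closure {α, β}, x * y = y * x) ∧
        Nat.card (Subgroup.closure {α, β}) = 3 * n ∧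
        ∃ φ : Multiplicative (ZMod 3) →* MulAut (Multiplicative (ZMod n)),
          φ ≠ 1 ∧
          Nonempty ((Subgroup.closure {α, β}) ≃*
            SemidirectProduct (Multiplicative (ZMod n)) (Multiplicative (ZMod 3)) φ)) := by
  have : Fact n.Prime := ⟨hn⟩
  obtain ⟨τ, hτ⟩ : ∃ τ : (ZMod n)ˣ, orderOf τ = 3 :=
    exists_prime_orderOf_dvd_card 3 (by rwa [ZMod.card_units])
  set k := (τ : ZMod n).val
  have hk : (k : ZMod n) = τ := ZMod.natCast_zmod_val _
  obtain ⟨μ, rfl⟩ : IsUnit lam := (orderOf_pos_iff.mp (hlam ▸ hn.pos)).isUnit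
  rw [orderOf_units] at hlam
  have hb : (b : Matrix (Fin 3) (Fin 3) F) = Matrix.cyclicMonomial A B := hbmat
  refine ⟨k + 1, diagonal fun j ↦ μ ^ ![1, k + 1, 0] j, by simp [Matrix.diagonal_fin_three],
    ?_, ?_⟩
  · have hμq : μ ^ (q + 1) = 1 := orderOf_dvd_iff_pow_eq_one.mp (hlam ▸ hnq)
    rintro g (rfl | rfl) v -
    · rw [coe_diagonal,
        fermatEval_applyMat_diagonal q fun j ↦ by rw [pow_right_comm, hμq, one_pow]]
    · rw [hb, fermatEval_applyMat_cyclicMonomial q hA hB]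
  intro α β
  obtain ⟨hαord, hβord, hconj⟩ := mk_diagonal_cyclicMonomial_relations hb hlam
    (dvd_succ_mul_val_add_one_of_orderOf_eq_three hτ)
  have hτ1 : τ ≠ 1 := fun h ↦ by simp [h] at hτ
  have hτ3 : τ ^ 3 = 1 := hτ ▸ pow_orderOf_eq_one τ
  have hnc : β * α ≠ α * β :=
    mul_ne_mul_of_conj_eq_pow hαord hconj (by rwa [hk, Ne, Units.val_eq_one])
  obtain ⟨e⟩ := nonempty_closure_pair_mulEquiv_semidirectProduct
    ((Nat.coprime_primes hn Nat.prime_three).mpr (by rintro rfl; omega))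
    hαord hβord hτ3 hk hconj
  refine ⟨hαord, hβord, hconj ▸ npow_mem_zpowers α k, hnc,
    fun hall ↦ hnc (hall β (subset_closure (by simp)) α (subset_closure (by simp))), ?_,
    unitAction 3 τ hτ3, unitAction_ne_one 3 τ hτ3 hτ1, ⟨e⟩⟩
  rw [Nat.card_congr e.toEquiv, SemidirectProduct.card]
  simp [mul_comm]

/-- Let `q` be a prime power with `3 ∣ q-1`, `n ≠ 2` a prime with
`n ∣ q+1` and `3 ∣ n-1`.  Fix `λ ∈ 𝔽_{q²}` of order `n` and `A, B` with
`A^(q+1) = B^(q+1) = 1`.  Then there is `i` such that the projectivities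
`α : (X:Y:Z) ↦ (λX : λ^i Y : Z)` and `β : (X:Y:Z) ↦ (AY : BZ : X)` both preserve the
Fermat curve `X^(q+1)+Y^(q+1)+Z^(q+1) = 0`, `α` has order `n`, `β` has order `3`,
`β` normalizes `⟨α⟩` without centralizing it, and `G = ⟨α,β⟩` is a nonabelian group of
order `3n` isomorphic to a nontrivial semidirect product `C_n ⋊ C_3`. -/
theorem stmt_11 (p : ℕ) (hp : p.Prime) (h : ℕ) (hh : 1 ≤ h) (q : ℕ) (hq : q = p ^ h)
    (n : ℕ) (hn : n.Prime) (hn2 : n ≠ 2) (hnq : n ∣ q + 1) (h3n : 3 ∣ n - 1)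
    (h3q : 3 ∣ q - 1)
    (F : Type) [Field F] [Fintype F] (hF : Fintype.card F = q ^ 2)
    (K : Type) [Field K] [IsAlgClosed K] [Algebra F K]
    (lam : F) (hlam : orderOf lam = n)
    (A B : F) (hA : A ^ (q + 1) = 1) (hB : B ^ (q + 1) = 1)
    (b : Matrix.GeneralLinearGroup (Fin 3) F)
    (hbmat : (b : Matrix (Fin 3) (Fin 3) F) = !![0, A, 0; 0, 0, B; 1, 0, 0]) :
    ∃ (i : ℕ) (a : Matrix.GeneralLinearGroup (Fin 3) F),
      (a : Matrix (Fin 3) (Fin 3) F) = !![lam, 0, 0; 0, lam ^ i, 0; 0, 0, 1] ∧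
      (∀ g ∈ ({a, b} : Set (Matrix.GeneralLinearGroup (Fin 3) F)),
        ∀ v : Fin 3 → K, v ≠ 0 →
          (fermatEval q v = 0 ↔ fermatEval q (applyMat (g : Matrix (Fin 3) (Fin 3) F) v) = 0)) ∧
      (let α : Matrix.GeneralLinearGroup (Fin 3) F ⧸
          Subgroup.center (Matrix.GeneralLinearGroup (Fin 3) F) := QuotientGroup.mk a
       let β : Matrix.GeneralLinearGroup (Fin 3) F ⧸
          Subgroup.center (Matrix.GeneralLinearGroup (Fin 3) F) := QuotientGroup.mk b
       orderOf α = n ∧ orderOf β = 3 ∧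
        β * α * β⁻¹ ∈ Subgroup.zpowers α ∧ β * α ≠ α * β ∧
        (¬ ∀ x ∈ Subgroup.closure {α, β}, ∀ y ∈ Subgroup.closure {α, β}, x * y = y * x) ∧
        Nat.card (Subgroup.closure {α, β}) = 3 * n ∧
        ∃ φ : Multiplicative (ZMod 3) →* MulAut (Multiplicative (ZMod n)),
          φ ≠ 1 ∧
          Nonempty ((Subgroup.closure {α, β}) ≃*
            SemidirectProduct (Multiplicative (ZMod n)) (Multiplicative (ZMod 3)) φ)) :=
  stmt_11_general q n hn hnq h3n F K lam hlam A B hA hB b hbmat
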